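/- Let X ∼ F_W(·; α) with F_W(x; α) = 1 − exp(−c0·x^α). Then the psi-function ψ̃ᵥᵤ(y; α) = [h̃(y^α)]ᵥᵘ − μ̃(α), with μ̃(α) = v + ∫ᵥᵘ exp(−c0·(h̃^←(z) − 1)) dz, has zero mean under the truncated Weibull distribution: ∫₁^∞ ψ̃ᵥᵤ(y; α) dF̃_W(y; α) = 0 for all α > 0. -/

import Mathlib

open Real Set MeasureTheory

/-- `h t = (c0 t - 1) log t - 1`. -/
noncomputable def h (c0 t : ℝ) : ℝ := (c0 * t - 1) * Real.log t - 1

/-- Generalized inverse `h̃^←(y) = inf {t ≥ 1 : h t ≥ y}`. -/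
noncomputable def hinv (c0 y : ℝ) : ℝ := sInf {t : ℝ | 1 ≤ t ∧ y ≤ h c0 t}

/-- Truncation `[z]ᵥᵘ = min (max z v) u`. -/
noncomputable def trunc (v u z : ℝ) : ℝ := min (max z v) u

/-- Density of the Weibull distribution truncated at 1. -/
noncomputable def truncDens (c0 α y : ℝ) : ℝ :=
  c0 * α * y ^ (α - 1) * Real.exp (-c0 * (y ^ α - 1))

/-!
By the layer-cake formula, the mean of `[g]ᵥᵘ` under a probability measure `P` is
`v + ∫ᵥᵘ P(g > z) dz`. Take `P = F̃_W(·; α)` and `g y = h̃(y^α)`. Since `h̃` is convex on `[1, ∞)`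
with `h̃(1) = -1`, for `z > -1` it exceeds `z` on `(1, ∞)` exactly to the right of `h̃^←(z)`, so
`P(h̃(Y^α) > z) = P(Y^α > h̃^←(z)) = exp(-c0 (h̃^←(z) - 1))`, the integrand defining `μ̃(α)`.
-/

open Filter Topology

section Truncation

variable {v u : ℝ}

lemma continuous_trunc : Continuous (trunc v u) :=
  (continuous_id.max continuous_const).min continuous_const

lemma trunc_mem_Icc (hvu : v ≤ u) (x : ℝ) : trunc v u x ∈ Icc v u :=
  ⟨le_min (le_max_right x v) hvu, min_le_right _ _⟩

lemma lt_trunc_iff {z : ℝ} (hz : v ≤ z) (x : ℝ) : z < trunc v u x ↔ z < x ∧ z < u := by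
  simp [trunc, hz.not_gt]

variable {Ω : Type*} [MeasurableSpace Ω] {μ : Measure Ω} [IsFiniteMeasure μ] {g : Ω → ℝ}

lemma integrable_trunc_comp (hvu : v ≤ u) (hg : Measurable g) :
    Integrable (fun x => trunc v u (g x)) μ :=
  .of_bound (continuous_trunc.measurable.comp hg).aestronglyMeasurable (max |v| |u|)
    (ae_of_all _ fun x =>
      abs_le_max_abs_abs (trunc_mem_Icc hvu (g x)).1 (trunc_mem_Icc hvu (g x)).2)

theorem integral_trunc_comp_eq_integral_meas_lt (hvu : v ≤ u) (hg : Measurable g) :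
    ∫ x, trunc v u (g x) ∂μ = v * μ.real univ + ∫ z in v..u, μ.real {x | z < g x} := by
  have hint := integrable_trunc_comp (μ := μ) hvu hg
  have hlayer : ∫ x, (trunc v u (g x) - v) ∂μ
      = ∫ t in Ioi 0, μ.real {x | t < trunc v u (g x) - v} :=
    (hint.sub (integrable_const v)).integral_eq_integral_meas_lt
      (ae_of_all _ fun x => sub_nonneg.2 (trunc_mem_Icc hvu (g x)).1)
  have hlevel : ∀ t ∈ Ioo 0 (u - v), {x | t < trunc v u (g x) - v} = {x | v + t < g x} := by
    intro t ht
    ext x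
    simp only [mem_ofPred_eq, lt_sub_iff_add_lt', lt_trunc_iff (by linarith [ht.1] : v ≤ v + t)]
    exact and_iff_left (by linarith [ht.2])
  have hempty : ∀ t ∈ Ioi 0 \ Ioo 0 (u - v), {x | t < trunc v u (g x) - v} = ∅ := by
    intro t ht
    ext x
    simp only [mem_ofPred_eq, mem_empty_iff_false, iff_false, not_lt]
    have : u - v ≤ t := not_lt.1 fun h' => ht.2 ⟨ht.1, h'⟩
    linarith [(trunc_mem_Icc hvu (g x)).2]
  calc ∫ x, trunc v u (g x) ∂μ = v * μ.real univ + ∫ x, (trunc v u (g x) - v) ∂μ := by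
        rw [integral_sub hint (integrable_const v), integral_const, smul_eq_mul]; ring
    _ = v * μ.real univ + ∫ t in Ioo 0 (u - v), μ.real {x | v + t < g x} := by
        rw [hlayer, setIntegral_eq_of_subset_of_forall_sdiff_eq_zero measurableSet_Ioi
          Ioo_subset_Ioi_self fun t ht => by simp [hempty t ht]]
        exact congrArg _ (setIntegral_congr_fun measurableSet_Ioo fun t ht => by rw [hlevel t ht])
    _ = v * μ.real univ + ∫ z in v..u, μ.real {x | z < g x} := by
        rw [← integral_Ioc_eq_integral_Ioo, ← intervalIntegral.integral_of_le (by linarith),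
          intervalIntegral.integral_comp_add_left (fun z => μ.real {x | z < g x})]
        simp

end Truncation

theorem ConvexOn.setOf_lt_inter_Ioi_eq {f : ℝ → ℝ} {a z : ℝ} (hf : ConvexOn ℝ (Ici a) f)
    (hcont : ContinuousOn f (Ici a)) (hz : f a < z) (hne : ∃ t, a ≤ t ∧ z ≤ f t) :
    {w | z < f w} ∩ Ioi a = Ioi (sInf {t | a ≤ t ∧ z ≤ f t}) := by
  set S := {t | a ≤ t ∧ z ≤ f t}
  have hbdd : BddBelow S := ⟨a, fun t ht => ht.1⟩
  obtain ⟨hab, hzb⟩ : sInf S ∈ S :=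
    (hcont.preimage_isClosed_of_isClosed isClosed_Ici isClosed_Ici).csInf_mem hne hbdd
  obtain ⟨c, hc, hfc⟩ := intermediate_value_Icc hab (hcont.mono Icc_subset_Ici_self) ⟨hz.le, hzb⟩
  have hfb : f (sInf S) = z := le_antisymm hc.2 (csInf_le hbdd ⟨hc.1, hfc.ge⟩) ▸ hfc
  have hab' : a < sInf S := hab.lt_of_ne fun h => by rw [← h] at hfb; linarith
  ext w
  constructor
  · rintro ⟨hzw : z < f w, haw : a < w⟩
    exact (csInf_le hbdd ⟨haw.le, hzw.le⟩).lt_of_ne fun h => by rw [h] at hfb; linarith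
  · intro hbw
    have haw := hab'.trans hbw
    refine ⟨?_, haw⟩
    have hseg : sInf S ∈ openSegment ℝ a w := by rw [openSegment_eq_Ioo haw]; exact ⟨hab', hbw⟩
    simpa [hfb] using hf.lt_right_of_left_lt self_mem_Ici haw.le hseg (hfb ▸ hz)

section LevelSets

variable {c0 : ℝ}

lemma h_one : h c0 1 = -1 := by simp [h]

lemma measurable_h : Measurable (h c0) := by unfold h; fun_prop

lemma continuousOn_h : ContinuousOn (h c0) (Ici 1) := by
  unfold h
  exact ((continuous_const.mul continuous_id).sub continuous_const).continuousOn.mul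
    (continuousOn_log.mono fun t ht => (one_pos.trans_le ht).ne') |>.sub continuousOn_const

lemma convexOn_h (hc0 : 0 ≤ c0) : ConvexOn ℝ (Ici 1) (h c0) := by
  have hsub : Ici (1 : ℝ) ⊆ Ioi 0 := fun t (ht : 1 ≤ t) => (one_pos.trans_le ht : (0 : ℝ) < t)
  have := ((convexOn_mul_log.subset (hsub.trans Ioi_subset_Ici_self) (convex_Ici 1)).smul hc0).add
    (neg_convexOn_iff.2 (strictConcaveOn_log_Ioi.concaveOn.subset hsub (convex_Ici 1)))
  refine (this.add_const (-1)).congr fun t _ => ?_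
  simp only [h, Pi.add_apply, Pi.neg_apply, smul_eq_mul]
  ring

lemma tendsto_h_atTop (hc0 : 0 < c0) : Tendsto (h c0) atTop atTop := by
  refine tendsto_atTop_add_const_right _ (-1) ?_
  exact (tendsto_atTop_add_const_right _ (-1) (tendsto_id.const_mul_atTop hc0)).atTop_mul_atTop₀
    tendsto_log_atTop

lemma exists_le_h (hc0 : 0 < c0) (z : ℝ) : ∃ t, 1 ≤ t ∧ z ≤ h c0 t :=
  ((eventually_ge_atTop 1).and ((tendsto_h_atTop hc0).eventually_ge_atTop z)).exists

lemma one_le_hinv (hc0 : 0 < c0) (z : ℝ) : 1 ≤ hinv c0 z :=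
  le_csInf (exists_le_h hc0 z) fun _ ht => ht.1

lemma setOf_lt_h_inter_Ioi (hc0 : 0 < c0) {z : ℝ} (hz : -1 < z) :
    {w | z < h c0 w} ∩ Ioi 1 = Ioi (hinv c0 z) :=
  (convexOn_h hc0.le).setOf_lt_inter_Ioi_eq continuousOn_h (h_one ▸ hz) (exists_le_h hc0 z)

lemma setOf_lt_h_rpow_inter_Ioi (hc0 : 0 < c0) {α z : ℝ} (hα : 0 < α) (hz : -1 < z) :
    {y | z < h c0 (y ^ α)} ∩ Ioi 1 = Ioi (hinv c0 z ^ α⁻¹) := by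
  have hb := one_le_hinv hc0 z
  ext y
  simp only [mem_inter_iff, mem_ofPred_eq, mem_Ioi]
  constructor
  · rintro ⟨hzy, hy⟩
    have : y ^ α ∈ {w | z < h c0 w} ∩ Ioi 1 := ⟨hzy, one_lt_rpow hy hα⟩
    rw [setOf_lt_h_inter_Ioi hc0 hz] at this
    exact (rpow_inv_lt_iff_of_pos (by linarith) (by linarith) hα).2 this
  · intro hy
    have hy1 : 1 < y := (one_le_rpow hb (inv_nonneg.2 hα.le)).trans_lt hy
    have : y ^ α ∈ Ioi (hinv c0 z) := (rpow_inv_lt_iff_of_pos (by linarith) (by linarith) hα).1 hy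
    rw [← setOf_lt_h_inter_Ioi hc0 hz] at this
    exact ⟨this.1, hy1⟩

end LevelSets

/-- The law `F̃_W(·; α)`. -/
noncomputable def truncWeibull (c0 α : ℝ) : Measure ℝ :=
  (volume.restrict (Ioi 1)).withDensity fun y => ENNReal.ofReal (truncDens c0 α y)

section TruncWeibull

variable {c0 α : ℝ}

lemma measurable_truncDens : Measurable (truncDens c0 α) := by unfold truncDens; fun_prop

lemma truncDens_nonneg (hc0 : 0 ≤ c0) (hα : 0 ≤ α) {y : ℝ} (hy : 0 ≤ y) :
    0 ≤ truncDens c0 α y := by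
  unfold truncDens; positivity

lemma hasDerivAt_neg_exp_rpow {y : ℝ} (hy : y ≠ 0) :
    HasDerivAt (fun y => -exp (-c0 * (y ^ α - 1))) (truncDens c0 α y) y := by
  refine (((hasDerivAt_rpow_const (p := α) (Or.inl hy)).sub_const 1).const_mul (-c0)).exp.neg
    |>.congr_deriv ?_
  unfold truncDens; ring

lemma tendsto_neg_exp_rpow (hc0 : 0 < c0) (hα : 0 < α) :
    Tendsto (fun y : ℝ => -exp (-c0 * (y ^ α - 1))) atTop (𝓝 0) := by
  simpa [sub_eq_add_neg] using ((tendsto_exp_atBot.comp ((tendsto_atTop_add_const_right _ (-1)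
    (tendsto_rpow_atTop hα)).const_mul_atTop_of_neg (neg_neg_of_pos hc0))).neg)

lemma integrableOn_truncDens_Ioi (hc0 : 0 < c0) (hα : 0 < α) {t : ℝ} (ht : 0 < t) :
    IntegrableOn (truncDens c0 α) (Ioi t) :=
  integrableOn_Ioi_deriv_of_nonneg (hasDerivAt_neg_exp_rpow ht.ne').continuousAt.continuousWithinAt
    (fun _ hy => hasDerivAt_neg_exp_rpow (ht.trans hy).ne')
    (fun _ hy => truncDens_nonneg hc0.le hα.le (ht.trans hy).le) (tendsto_neg_exp_rpow hc0 hα)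

lemma integral_truncDens_Ioi (hc0 : 0 < c0) (hα : 0 < α) {t : ℝ} (ht : 0 < t) :
    ∫ y in Ioi t, truncDens c0 α y = exp (-c0 * (t ^ α - 1)) := by
  rw [integral_Ioi_of_hasDerivAt_of_tendsto
    (hasDerivAt_neg_exp_rpow ht.ne').continuousAt.continuousWithinAt
    (fun y hy => hasDerivAt_neg_exp_rpow (ht.trans hy).ne') (integrableOn_truncDens_Ioi hc0 hα ht)
    (tendsto_neg_exp_rpow hc0 hα)]
  ring

lemma truncWeibull_inter_Ioi_one {s : Set ℝ} (hs : MeasurableSet s) :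
    truncWeibull c0 α (s ∩ Ioi 1) = truncWeibull c0 α s := by
  rw [truncWeibull, withDensity_apply _ hs, withDensity_apply _ (hs.inter measurableSet_Ioi),
    Measure.restrict_restrict hs, Measure.restrict_restrict (hs.inter measurableSet_Ioi),
    inter_assoc, inter_self]

lemma truncWeibull_Ioi (hc0 : 0 < c0) (hα : 0 < α) {t : ℝ} (ht : 1 ≤ t) :
    truncWeibull c0 α (Ioi t) = ENNReal.ofReal (exp (-c0 * (t ^ α - 1))) := by
  have ht0 : 0 < t := one_pos.trans_le ht
  rw [truncWeibull, withDensity_apply _ measurableSet_Ioi,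
    Measure.restrict_restrict measurableSet_Ioi, Ioi_inter_Ioi, sup_eq_left.2 ht,
    ← ofReal_integral_eq_lintegral_ofReal (integrableOn_truncDens_Ioi hc0 hα ht0),
    integral_truncDens_Ioi hc0 hα ht0]
  exact ae_restrict_of_forall_mem measurableSet_Ioi fun y hy =>
    truncDens_nonneg hc0.le hα.le (ht0.trans hy).le

lemma isProbabilityMeasure_truncWeibull (hc0 : 0 < c0) (hα : 0 < α) :
    IsProbabilityMeasure (truncWeibull c0 α) := by
  constructor
  rw [← truncWeibull_inter_Ioi_one MeasurableSet.univ, univ_inter, truncWeibull_Ioi hc0 hα le_rfl]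
  simp

lemma integral_truncWeibull (hc0 : 0 ≤ c0) (hα : 0 ≤ α) (f : ℝ → ℝ) :
    ∫ y, f y ∂truncWeibull c0 α = ∫ y in Ioi 1, f y * truncDens c0 α y := by
  rw [truncWeibull, integral_withDensity_eq_integral_toReal_smul
    measurable_truncDens.ennreal_ofReal (ae_of_all _ fun _ => ENNReal.ofReal_lt_top)]
  refine setIntegral_congr_fun measurableSet_Ioi fun y hy => ?_
  rw [ENNReal.toReal_ofReal (truncDens_nonneg hc0 hα (one_pos.trans hy).le), smul_eq_mul,
    mul_comm]

lemma truncWeibull_real_setOf_lt_h_rpow (hc0 : 0 < c0) (hα : 0 < α) {z : ℝ} (hz : -1 < z) :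
    (truncWeibull c0 α).real {y | z < h c0 (y ^ α)} = exp (-c0 * (hinv c0 z - 1)) := by
  have hmeas : MeasurableSet {y : ℝ | z < h c0 (y ^ α)} :=
    measurableSet_lt measurable_const (measurable_h.comp (measurable_id.pow_const α))
  have hb := one_le_hinv hc0 z
  rw [measureReal_def, ← truncWeibull_inter_Ioi_one hmeas, setOf_lt_h_rpow_inter_Ioi hc0 hα hz,
    truncWeibull_Ioi hc0 hα (one_le_rpow hb (inv_nonneg.2 hα.le)),
    ENNReal.toReal_ofReal (exp_pos _).le, ← rpow_mul (by linarith), inv_mul_cancel₀ hα.ne',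
    rpow_one]

end TruncWeibull

/-- The psi-function `ψ̃ᵥᵤ(y; α) = [h̃(y^α)]ᵥᵘ - μ̃(α)`, with
`μ̃(α) = v + ∫ᵥᵘ exp(-c0 (h̃^←(z) - 1)) dz`, has zero mean under the truncated
Weibull distribution `F̃_W(·; α)` for every `α > 0`. -/
theorem stmt16 (c0 v u : ℝ) (hc0 : 0 < c0) (hv : -1 ≤ v) (hvu : v < u) :
    ∀ α > (0:ℝ),
      ∫ y in Ioi (1:ℝ),
        (trunc v u (h c0 (y ^ α))
          - (v + ∫ z in v..u, Real.exp (-c0 * (hinv c0 z - 1)))) * truncDens c0 α y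
        = 0 := by
  intro α hα
  have := isProbabilityMeasure_truncWeibull hc0 hα
  have hg : Measurable fun y : ℝ => h c0 (y ^ α) := measurable_h.comp (measurable_id.pow_const α)
  rw [← integral_truncWeibull hc0.le hα.le, integral_sub (integrable_trunc_comp hvu.le hg)
    (integrable_const _), integral_trunc_comp_eq_integral_meas_lt hvu.le hg, integral_const,
    probReal_univ, one_smul, mul_one, sub_eq_zero]
  -- `Ι v u = Ioc v u` omits `z = v`: at `z = -1` the level-set identity fails when `c0 < 1`,
  -- as `h` then dips below `-1` just to the right of `1`.
  refine congrArg _ (intervalIntegral.integral_congr_ae (ae_of_all _ fun z hz => ?_))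
  rw [uIoc_of_le hvu.le] at hz
  exact truncWeibull_real_setOf_lt_h_rpow hc0 hα (hv.trans_lt hz.1)
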